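/- arXiv:2309.01276 — 2 statements merged into one kernel-verified Lean document; each statement's English description precedes it below -/
import Mathlib

section
/- Let v^1, ..., v^N be sub-probability couplings of probability measures p̂^i and p^i over relations R^i ⊆ X̂^i × X^i with respect to δ^i, respectively. Then the product measure v = ∏_i v^i (viewed as a measure on (∏_i X̂^i) × (∏_i X^i)) is a sub-probability coupling of p̂ = ∏_i p̂^i and p = ∏_i p^i over the product relation R = {(x̂, x) : (x̂^i, x^i) ∈ R^i for all i} with respect to δ = 1 − ∏_i (1 − δ^i). -/
open MeasureTheory
open scoped ENNReal

/-! The coupling `V` is the image of `∏ vⁱ` under the regrouping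
`(∀ i, X̂ⁱ × Xⁱ) ≃ᵐ (∀ i, X̂ⁱ) × (∀ i, Xⁱ)`, so `V` of any set, measurable or not, is the
product measure of its preimage. Hence `V` has total mass `∏ vⁱ(univ) ≥ ∏ (1 - δⁱ)`, and the
preimage of the product relation is the box `∏ Rⁱ`, of mass `∏ vⁱ(Rⁱ) = ∏ vⁱ(univ)`. The
marginals of `V` are the products of the marginals of the `vⁱ`, so their domination follows
from monotonicity of the product measure. -/

open Set

theorem MeasureTheory.OuterMeasure.pi_mono {ι : Type*} [Fintype ι] {α : ι → Type*}
    {m n : ∀ i, OuterMeasure (α i)} (h : ∀ i, m i ≤ n i) :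
    OuterMeasure.pi m ≤ OuterMeasure.pi n :=
  le_pi.2 fun s _ => (pi_pi_le m s).trans (Finset.prod_le_prod' fun i _ => h i (s i))

theorem MeasureTheory.Measure.pi_mono {ι : Type*} [Fintype ι] {α : ι → Type*}
    [∀ i, MeasurableSpace (α i)] {μ ν : ∀ i, Measure (α i)} (h : ∀ i, μ i ≤ ν i) :
    Measure.pi μ ≤ Measure.pi ν :=
  Measure.le_iff.2 fun s hs => by
    rw [Measure.pi_def, Measure.pi_def, toMeasure_apply _ _ hs, toMeasure_apply _ _ hs]
    exact OuterMeasure.pi_mono (fun i => Measure.toOuterMeasure_le.2 (h i)) s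

/-- Dependent version of `MeasurableEquiv.arrowProdEquivProdArrow`. -/
def MeasurableEquiv.piProdEquivProdPi {ι : Type*} (α β : ι → Type*)
    [∀ i, MeasurableSpace (α i)] [∀ i, MeasurableSpace (β i)] :
    (∀ i, α i × β i) ≃ᵐ (∀ i, α i) × (∀ i, β i) where
  __ := Equiv.arrowProdEquivProdArrow ι α β
  measurable_toFun := by
    dsimp [Equiv.arrowProdEquivProdArrow]
    fun_prop
  measurable_invFun := by
    dsimp [Equiv.arrowProdEquivProdArrow]
    fun_prop

theorem MeasurableEquiv.piProdEquivProdPi_preimage_setOf {ι : Type*} {α β : ι → Type*}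
    [∀ i, MeasurableSpace (α i)] [∀ i, MeasurableSpace (β i)] (R : ∀ i, Set (α i × β i)) :
    piProdEquivProdPi α β ⁻¹' {q | ∀ i, (q.1 i, q.2 i) ∈ R i} = univ.pi R := by
  ext f
  simp [piProdEquivProdPi, Equiv.arrowProdEquivProdArrow]

namespace MeasureTheory.Measure

section Marginals

variable {γ δ : Type*} [MeasurableSpace γ] [MeasurableSpace δ] {ρ : Measure (γ × δ)}

theorem fst_le_iff {μ : Measure γ} : ρ.fst ≤ μ ↔ ∀ s, MeasurableSet s → ρ (s ×ˢ univ) ≤ μ s :=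
  Measure.le_iff.trans <| forall₂_congr fun s hs => by rw [fst_apply hs, prod_univ]

theorem snd_le_iff {ν : Measure δ} : ρ.snd ≤ ν ↔ ∀ s, MeasurableSet s → ρ (univ ×ˢ s) ≤ ν s :=
  Measure.le_iff.trans <| forall₂_congr fun s hs => by rw [snd_apply hs, univ_prod]

end Marginals

section PiProd

variable {ι : Type*} [Fintype ι] {α β : ι → Type*}
  [∀ i, MeasurableSpace (α i)] [∀ i, MeasurableSpace (β i)]
  (ρ : ∀ i, Measure (α i × β i)) [∀ i, IsFiniteMeasure (ρ i)]

theorem fst_map_piProdEquivProdPi :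
    ((Measure.pi ρ).map (MeasurableEquiv.piProdEquivProdPi α β)).fst =
      Measure.pi fun i => (ρ i).fst :=
  (fst_map_prodMk (by fun_prop)).trans
    (measurePreserving_pi ρ _ fun i => ⟨measurable_fst, rfl⟩).map_eq

theorem snd_map_piProdEquivProdPi :
    ((Measure.pi ρ).map (MeasurableEquiv.piProdEquivProdPi α β)).snd =
      Measure.pi fun i => (ρ i).snd :=
  (snd_map_prodMk (by fun_prop)).trans
    (measurePreserving_pi ρ _ fun i => ⟨measurable_snd, rfl⟩).map_eq

end PiProd

end MeasureTheory.Measure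

theorem prod_subProbCoupling_general {N : ℕ} {Xh X : Fin N → Type*}
    [∀ i, MeasurableSpace (Xh i)] [∀ i, MeasurableSpace (X i)]
    (ph : ∀ i, Measure (Xh i)) (p : ∀ i, Measure (X i))
    (R : ∀ i, Set (Xh i × X i))
    (v : ∀ i, Measure (Xh i × X i)) (δ : Fin N → ℝ≥0∞)
    (hsub : ∀ i, v i Set.univ ≤ 1)
    (hmass : ∀ i, 1 - δ i ≤ v i Set.univ)
    (hconc : ∀ i, v i Set.univ = v i (R i))
    (hmarg1 : ∀ i, ∀ A : Set (Xh i), MeasurableSet A → v i (A ×ˢ Set.univ) ≤ ph i A)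
    (hmarg2 : ∀ i, ∀ B : Set (X i), MeasurableSet B → v i (Set.univ ×ˢ B) ≤ p i B) :
    let e : (∀ i, Xh i × X i) → (∀ i, Xh i) × (∀ i, X i) :=
      fun f => (fun i => (f i).1, fun i => (f i).2)
    let V : Measure ((∀ i, Xh i) × (∀ i, X i)) := Measure.map e (Measure.pi v)
    let Rprod : Set ((∀ i, Xh i) × (∀ i, X i)) := {q | ∀ i, (q.1 i, q.2 i) ∈ R i}
    V Set.univ ≤ 1 ∧
    1 - (1 - ∏ i, (1 - δ i)) ≤ V Set.univ ∧
    V Set.univ = V Rprod ∧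
    (∀ A : Set (∀ i, Xh i), MeasurableSet A → V (A ×ˢ Set.univ) ≤ Measure.pi ph A) ∧
    (∀ B : Set (∀ i, X i), MeasurableSet B → V (Set.univ ×ˢ B) ≤ Measure.pi p B) := by
  intro e V Rprod
  have (i : Fin N) : IsFiniteMeasure (v i) := ⟨(hsub i).trans_lt ENNReal.one_lt_top⟩
  have hV : V = (Measure.pi v).map (MeasurableEquiv.piProdEquivProdPi Xh X) := rfl
  have hV_univ : V univ = ∏ i, v i univ := by
    rw [hV, MeasurableEquiv.map_apply, preimage_univ, Measure.pi_univ]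
  have hV_R : V Rprod = ∏ i, v i (R i) := by
    rw [hV, MeasurableEquiv.map_apply, MeasurableEquiv.piProdEquivProdPi_preimage_setOf,
      Measure.pi_pi]
  refine ⟨?_, ?_, ?_, ?_, ?_⟩
  · exact hV_univ ▸ Finset.prod_le_one' fun i _ => hsub i
  · rw [ENNReal.sub_sub_cancel ENNReal.one_ne_top
      (Finset.prod_le_one' fun _ _ => tsub_le_self), hV_univ]
    exact Finset.prod_le_prod' fun i _ => hmass i
  · rw [hV_univ, hV_R]
    exact Finset.prod_congr rfl fun i _ => hconc i
  · refine Measure.fst_le_iff.1 ?_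
    rw [hV, Measure.fst_map_piProdEquivProdPi]
    exact Measure.pi_mono fun i => Measure.fst_le_iff.2 (hmarg1 i)
  · refine Measure.snd_le_iff.1 ?_
    rw [hV, Measure.snd_map_piProdEquivProdPi]
    exact Measure.pi_mono fun i => Measure.snd_le_iff.2 (hmarg2 i)

/-- The product of sub-probability couplings is a sub-probability coupling of the
product measures over the product relation, with deficiency `1 - ∏ (1 - δ i)`. -/
theorem prod_subProbCoupling {N : ℕ} {Xh X : Fin N → Type*}
    [∀ i, MeasurableSpace (Xh i)] [∀ i, MeasurableSpace (X i)]
    (ph : ∀ i, Measure (Xh i)) (p : ∀ i, Measure (X i))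
    [∀ i, IsProbabilityMeasure (ph i)] [∀ i, IsProbabilityMeasure (p i)]
    (R : ∀ i, Set (Xh i × X i)) (hR : ∀ i, MeasurableSet (R i))
    (v : ∀ i, Measure (Xh i × X i)) (δ : Fin N → ℝ≥0∞) (hδ : ∀ i, δ i ≤ 1)
    (hsub : ∀ i, v i Set.univ ≤ 1)
    (hmass : ∀ i, 1 - δ i ≤ v i Set.univ)
    (hconc : ∀ i, v i Set.univ = v i (R i))
    (hmarg1 : ∀ i, ∀ A : Set (Xh i), MeasurableSet A → v i (A ×ˢ Set.univ) ≤ ph i A)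
    (hmarg2 : ∀ i, ∀ B : Set (X i), MeasurableSet B → v i (Set.univ ×ˢ B) ≤ p i B) :
    let e : (∀ i, Xh i × X i) → (∀ i, Xh i) × (∀ i, X i) :=
      fun f => (fun i => (f i).1, fun i => (f i).2)
    let V : Measure ((∀ i, Xh i) × (∀ i, X i)) := Measure.map e (Measure.pi v)
    let Rprod : Set ((∀ i, Xh i) × (∀ i, X i)) := {q | ∀ i, (q.1 i, q.2 i) ∈ R i}
    V Set.univ ≤ 1 ∧
    1 - (1 - ∏ i, (1 - δ i)) ≤ V Set.univ ∧
    V Set.univ = V Rprod ∧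
    (∀ A : Set (∀ i, Xh i), MeasurableSet A → V (A ×ˢ Set.univ) ≤ Measure.pi ph A) ∧
    (∀ B : Set (∀ i, X i), MeasurableSet B → V (Set.univ ×ˢ B) ≤ Measure.pi p B) :=
  prod_subProbCoupling_general ph p R v δ hsub hmass hconc hmarg1 hmarg2
end

section
/- Let p̂ and p be probability measures on spaces X̂ and X, R ⊆ X̂ × X measurable, and let v be a sub-probability coupling of p̂ and p over R. Suppose v(X̂ × X) < 1. Define the completion w(dx̂ × dx) = v(dx̂ × dx) + (1/(1 − v(X̂ × X))) · (p̂(dx̂) − v(dx̂ × X)) ⊗ (p(dx) − v(X̂ × dx)). Then w is a probability measure on X̂ × X whose marginals are exactly p̂ and p, and w(R) ≥ v(R). -/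
open MeasureTheory
open scoped ENNReal

/-- Completion of a sub-probability coupling to a full coupling: adding the normalized
product of the leftover marginals yields a probability measure whose marginals are
exactly `p̂` and `p`, and which places at least as much mass on `R` as `v`. -/
theorem subProbCoupling_completion {Xh X : Type*} [MeasurableSpace Xh] [MeasurableSpace X]
    (ph : Measure Xh) (p : Measure X) [IsProbabilityMeasure ph] [IsProbabilityMeasure p]
    (R : Set (Xh × X)) (hR : MeasurableSet R)
    (v : Measure (Xh × X)) [IsFiniteMeasure v]
    (hconc : v Set.univ = v R)
    (hmarg1 : v.map Prod.fst ≤ ph)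
    (hmarg2 : v.map Prod.snd ≤ p)
    (hlt : v Set.univ < 1) :
    let w : Measure (Xh × X) :=
      v + ((1 - v Set.univ)⁻¹) •
        ((ph - v.map Prod.fst).prod (p - v.map Prod.snd))
    IsProbabilityMeasure w ∧ w.map Prod.fst = ph ∧ w.map Prod.snd = p ∧ v R ≤ w R := by
  intro w
  set a := v Set.univ with ha
  set μ₁ := ph - v.map Prod.fst with hμ₁
  set μ₂ := p - v.map Prod.snd with hμ₂
  have hfin1 : IsFiniteMeasure (v.map Prod.fst) :=
    isFiniteMeasure_of_le ph hmarg1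
  have hfin2 : IsFiniteMeasure (v.map Prod.snd) :=
    isFiniteMeasure_of_le p hmarg2
  have hc1 : μ₁ + v.map Prod.fst = ph := Measure.sub_add_cancel_of_le hmarg1
  have hc2 : μ₂ + v.map Prod.snd = p := Measure.sub_add_cancel_of_le hmarg2
  have hmapfst : v.map Prod.fst Set.univ = a := by
    rw [Measure.map_apply measurable_fst MeasurableSet.univ, Set.preimage_univ]
  have hmapsnd : v.map Prod.snd Set.univ = a := by
    rw [Measure.map_apply measurable_snd MeasurableSet.univ, Set.preimage_univ]
  have hμ₁univ : μ₁ Set.univ = 1 - a := by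
    rw [hμ₁, Measure.sub_apply MeasurableSet.univ hmarg1, hmapfst,
      measure_univ]
  have hμ₂univ : μ₂ Set.univ = 1 - a := by
    rw [hμ₂, Measure.sub_apply MeasurableSet.univ hmarg2, hmapsnd,
      measure_univ]
  have hcne : (1 : ℝ≥0∞) - a ≠ 0 := by
    simp only [ne_eq, tsub_eq_zero_iff_le, not_le]
    exact hlt
  have hcnetop : (1 : ℝ≥0∞) - a ≠ ⊤ := by
    exact ne_top_of_le_ne_top ENNReal.one_ne_top tsub_le_self
  have hfinμ₁ : IsFiniteMeasure μ₁ := by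
    refine isFiniteMeasure_of_le ph ?_
    rw [hμ₁]; exact Measure.sub_le
  have hfinμ₂ : IsFiniteMeasure μ₂ := by
    refine isFiniteMeasure_of_le p ?_
    rw [hμ₂]; exact Measure.sub_le
  have hwfst : w.map Prod.fst = ph := by
    show (v + ((1 - a)⁻¹) • (μ₁.prod μ₂)).map Prod.fst = ph
    rw [Measure.map_add _ _ measurable_fst, Measure.map_smul,
      Measure.map_fst_prod, hμ₂univ, smul_smul,
      ENNReal.inv_mul_cancel hcne hcnetop, one_smul]
    rw [add_comm]
    exact hc1
  have hwsnd : w.map Prod.snd = p := by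
    show (v + ((1 - a)⁻¹) • (μ₁.prod μ₂)).map Prod.snd = p
    rw [Measure.map_add _ _ measurable_snd, Measure.map_smul,
      Measure.map_snd_prod, hμ₁univ, smul_smul,
      ENNReal.inv_mul_cancel hcne hcnetop, one_smul]
    rw [add_comm]
    exact hc2
  have hwuniv : w Set.univ = 1 := by
    show (v + ((1 - a)⁻¹) • (μ₁.prod μ₂)) Set.univ = 1
    rw [Measure.add_apply, Measure.smul_apply, smul_eq_mul,
      ← Set.univ_prod_univ, Measure.prod_prod, hμ₁univ, hμ₂univ,
      ← mul_assoc, ENNReal.inv_mul_cancel hcne hcnetop, one_mul,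
      Set.univ_prod_univ]
    exact add_tsub_cancel_of_le hlt.le
  refine ⟨⟨hwuniv⟩, hwfst, hwsnd, ?_⟩
  show v R ≤ (v + ((1 - a)⁻¹) • (μ₁.prod μ₂)) R
  rw [Measure.add_apply]
  exact le_self_add
end
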